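/- arXiv:1104.4832 — 3 statements merged into one kernel-verified Lean document; each statement's English description precedes it below -/
import Mathlib

section
/- Let $1 \le p \le n$, let $M_{p,n}$ be a $p \times n$ complex matrix, and let $M_{p-1,n}$ be the $(p-1) \times n$ minor obtained by deleting one row. Then the singular values interlace: $\sigma_i(M_{p,n}) \le \sigma_i(M_{p-1,n}) \le \sigma_{i+1}(M_{p,n})$ for all $1 \le i < p$, where singular values are arranged in increasing order. -/
open Matrix

/-- The singular values of a `p × n` complex matrix, arranged in increasing order:
the square roots of the eigenvalues of `A * Aᴴ`. -/
noncomputable def singVals {p n : ℕ} (A : Matrix (Fin p) (Fin n) ℂ) : Fin p → ℝ :=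
  fun i =>
    Real.sqrt ((Matrix.isHermitian_mul_conjTranspose_self A).eigenvalues
      (Tuple.sort ((Matrix.isHermitian_mul_conjTranspose_self A).eigenvalues) i))

/-!
The singular values of `M` are the square roots of the eigenvalues of the Gram matrix `M * Mᴴ`,
and deleting row `r` of `M` deletes row and column `r` of the Gram matrix. So it suffices to prove
Cauchy interlacing for a Hermitian matrix `A` of size `m + 1` and a principal submatrix `B`, viewed
as the compression of `A` along the isometry that extends vectors by zero. This is a
Courant–Fischer dimension count: the image of the span of eigenvectors of `B` for its `i + 1`
smallest eigenvalues meets the span of eigenvectors of `A` for its `m + 1 - i` largest ones in a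
nonzero vector, whose Rayleigh quotient is then squeezed between `λᵢ(A)` and `λᵢ(B)`. The upper
bound `λᵢ(B) ≤ λᵢ₊₁(A)` is the same count with the roles of small and large exchanged.
-/

open Module Submodule
open scoped InnerProductSpace

theorem Submodule.exists_mem_inf_ne_zero_of_finrank_lt {K V : Type*} [DivisionRing K]
    [AddCommGroup V] [Module K V] [FiniteDimensional K V] {s t : Submodule K V}
    (h : finrank K V < finrank K s + finrank K t) : ∃ x ∈ s, x ∈ t ∧ x ≠ 0 := by
  have : ¬Disjoint s t := fun hst => (finrank_add_finrank_le_of_disjoint hst).not_gt h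
  simpa [disjoint_def] using this

section TupleSort

variable {α : Type*} [LinearOrder α] {m : ℕ} {f : Fin m → α} {i k : Fin m}

theorem Tuple.apply_sort_le_apply_of_mem_map_Ici
    (hk : k ∈ (Finset.Ici i).map (Tuple.sort f).toEmbedding) :
    f (Tuple.sort f i) ≤ f k := by
  obtain ⟨j, hij, rfl⟩ := Finset.mem_map.mp hk
  exact Tuple.monotone_sort f (Finset.mem_Ici.mp hij)

theorem Tuple.apply_le_apply_sort_of_mem_map_Iic
    (hk : k ∈ (Finset.Iic i).map (Tuple.sort f).toEmbedding) :
    f k ≤ f (Tuple.sort f i) := by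
  obtain ⟨j, hji, rfl⟩ := Finset.mem_map.mp hk
  exact Tuple.monotone_sort f (Finset.mem_Iic.mp hji)

end TupleSort

section Eigenbasis

variable {𝕜 E ι : Type*} [RCLike 𝕜] [NormedAddCommGroup E] [InnerProductSpace 𝕜 E] [Fintype ι]
  {b : OrthonormalBasis ι 𝕜 E}

theorem OrthonormalBasis.inner_eq_zero_of_mem_span_image {s : Set ι} {x : E}
    (hx : x ∈ span 𝕜 (b '' s)) {i : ι} (hi : i ∉ s) : ⟪b i, x⟫_𝕜 = 0 := by
  have hperp : span 𝕜 (b '' s) ≤ (𝕜 ∙ b i)ᗮ := span_le.mpr <| by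
    rintro _ ⟨j, hj, rfl⟩
    exact mem_orthogonal_singleton_iff_inner_right.mpr
      (b.orthonormal.2 (ne_of_mem_of_not_mem hj hi).symm)
  exact mem_orthogonal_singleton_iff_inner_right.mp (hperp hx)

theorem OrthonormalBasis.finrank_span_image_finset (b : OrthonormalBasis ι 𝕜 E) (s : Finset ι) :
    finrank 𝕜 (span 𝕜 (b '' s)) = s.card := by
  rw [Set.image_eq_range]
  exact (finrank_span_eq_card (b.orthonormal.linearIndependent.comp _ Subtype.coe_injective)).trans
    (Fintype.card_coe s)

variable {T : E →ₗ[𝕜] E} {μ : ι → ℝ}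

theorem LinearMap.IsSymmetric.re_inner_apply_self_eq_sum (hT : T.IsSymmetric)
    (hb : ∀ i, T (b i) = (μ i : 𝕜) • b i) (x : E) :
    RCLike.re ⟪x, T x⟫_𝕜 = ∑ i, μ i * ‖⟪b i, x⟫_𝕜‖ ^ 2 := by
  rw [← b.sum_inner_mul_inner, map_sum]
  refine Finset.sum_congr rfl fun i _ => ?_
  rw [← hT, hb, inner_smul_left, RCLike.conj_ofReal, ← inner_conj_symm x (b i),
    mul_left_comm, RCLike.conj_mul]
  norm_cast

theorem LinearMap.IsSymmetric.re_inner_apply_self_le_of_mem_span (hT : T.IsSymmetric)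
    (hb : ∀ i, T (b i) = (μ i : 𝕜) • b i) {s : Set ι} {c : ℝ} (hc : ∀ i ∈ s, μ i ≤ c)
    {x : E} (hx : x ∈ span 𝕜 (b '' s)) : RCLike.re ⟪x, T x⟫_𝕜 ≤ c * ‖x‖ ^ 2 := by
  rw [hT.re_inner_apply_self_eq_sum hb, ← b.sum_sq_norm_inner_right, Finset.mul_sum]
  refine Finset.sum_le_sum fun i _ => ?_
  by_cases hi : i ∈ s
  · exact mul_le_mul_of_nonneg_right (hc i hi) (sq_nonneg _)
  · simp [b.inner_eq_zero_of_mem_span_image hx hi]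

theorem LinearMap.IsSymmetric.le_re_inner_apply_self_of_mem_span (hT : T.IsSymmetric)
    (hb : ∀ i, T (b i) = (μ i : 𝕜) • b i) {s : Set ι} {c : ℝ} (hc : ∀ i ∈ s, c ≤ μ i)
    {x : E} (hx : x ∈ span 𝕜 (b '' s)) : c * ‖x‖ ^ 2 ≤ RCLike.re ⟪x, T x⟫_𝕜 := by
  rw [hT.re_inner_apply_self_eq_sum hb, ← b.sum_sq_norm_inner_right, Finset.mul_sum]
  refine Finset.sum_le_sum fun i _ => ?_
  by_cases hi : i ∈ s
  · exact mul_le_mul_of_nonneg_right (hc i hi) (sq_nonneg _)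
  · simp [b.inner_eq_zero_of_mem_span_image hx hi]

end Eigenbasis

section SortedEigenvalues

variable {𝕜 E : Type*} [RCLike 𝕜] [NormedAddCommGroup E] [InnerProductSpace 𝕜 E] {m : ℕ}
  {T : E →ₗ[𝕜] E} {b : OrthonormalBasis (Fin m) 𝕜 E} {μ : Fin m → ℝ}

theorem LinearMap.IsSymmetric.exists_mem_ne_zero_sort_mul_le_re_inner (hT : T.IsSymmetric)
    (hb : ∀ i, T (b i) = (μ i : 𝕜) • b i) {W : Submodule 𝕜 E} (i : Fin m)
    (hW : i < finrank 𝕜 W) :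
    ∃ x ∈ W, x ≠ 0 ∧ μ (Tuple.sort μ i) * ‖x‖ ^ 2 ≤ RCLike.re ⟪x, T x⟫_𝕜 := by
  let U := span 𝕜 (b '' ((Finset.Ici i).map (Tuple.sort μ).toEmbedding : Set (Fin m)))
  have : FiniteDimensional 𝕜 E := .of_basis b.toBasis
  have hE : finrank 𝕜 E = m := by simp [finrank_eq_card_basis b.toBasis]
  obtain ⟨x, hxW, hxU, hx0⟩ := exists_mem_inf_ne_zero_of_finrank_lt (s := W) (t := U) <| by
    rw [b.finrank_span_image_finset, Finset.card_map, Fin.card_Ici]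
    omega
  exact ⟨x, hxW, hx0, hT.le_re_inner_apply_self_of_mem_span hb
    (fun _ hk => Tuple.apply_sort_le_apply_of_mem_map_Ici hk) hxU⟩

theorem LinearMap.IsSymmetric.exists_mem_ne_zero_re_inner_le_sort_mul (hT : T.IsSymmetric)
    (hb : ∀ i, T (b i) = (μ i : 𝕜) • b i) {W : Submodule 𝕜 E} (i : Fin m)
    (hW : m ≤ finrank 𝕜 W + i) :
    ∃ x ∈ W, x ≠ 0 ∧ RCLike.re ⟪x, T x⟫_𝕜 ≤ μ (Tuple.sort μ i) * ‖x‖ ^ 2 := by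
  let U := span 𝕜 (b '' ((Finset.Iic i).map (Tuple.sort μ).toEmbedding : Set (Fin m)))
  have : FiniteDimensional 𝕜 E := .of_basis b.toBasis
  have hE : finrank 𝕜 E = m := by simp [finrank_eq_card_basis b.toBasis]
  obtain ⟨x, hxW, hxU, hx0⟩ := exists_mem_inf_ne_zero_of_finrank_lt (s := W) (t := U) <| by
    rw [b.finrank_span_image_finset, Finset.card_map, Fin.card_Iic]
    omega
  exact ⟨x, hxW, hx0, hT.re_inner_apply_self_le_of_mem_span hb
    (fun _ hk => Tuple.apply_le_apply_sort_of_mem_map_Iic hk) hxU⟩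

end SortedEigenvalues

section Compression

variable {𝕜 E F : Type*} [RCLike 𝕜] [NormedAddCommGroup E] [InnerProductSpace 𝕜 E]
  [NormedAddCommGroup F] [InnerProductSpace 𝕜 F] {m : ℕ}
  {T : E →ₗ[𝕜] E} {bE : OrthonormalBasis (Fin (m + 1)) 𝕜 E} {μ : Fin (m + 1) → ℝ}
  {S : F →ₗ[𝕜] F} {bF : OrthonormalBasis (Fin m) 𝕜 F} {ν : Fin m → ℝ}
  {V : F →ₗᵢ[𝕜] E}

theorem LinearMap.IsSymmetric.sort_castSucc_le_sort_of_compression (hT : T.IsSymmetric)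
    (hbE : ∀ i, T (bE i) = (μ i : 𝕜) • bE i) (hS : S.IsSymmetric)
    (hbF : ∀ i, S (bF i) = (ν i : 𝕜) • bF i) (hV : ∀ y, ⟪V y, T (V y)⟫_𝕜 = ⟪y, S y⟫_𝕜)
    (i : Fin m) : μ (Tuple.sort μ i.castSucc) ≤ ν (Tuple.sort ν i) := by
  let U := span 𝕜 (bF '' ((Finset.Iic i).map (Tuple.sort ν).toEmbedding : Set (Fin m)))
  obtain ⟨_, ⟨y, hyU, rfl⟩, hy0, hlow⟩ :=
    hT.exists_mem_ne_zero_sort_mul_le_re_inner hbE (W := U.map V.toLinearMap) i.castSucc <| by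
      rw [← (equivMapOfInjective _ V.injective U).finrank_eq, bF.finrank_span_image_finset,
        Finset.card_map, Fin.card_Iic]
      simp
  have hup := hS.re_inner_apply_self_le_of_mem_span hbF
    (fun _ hk => Tuple.apply_le_apply_sort_of_mem_map_Iic hk) hyU
  rw [LinearIsometry.coe_toLinearMap, hV, V.norm_map] at hlow
  have hy : 0 < ‖y‖ ^ 2 := pow_pos (norm_pos_iff.mpr ((map_ne_zero_iff V V.injective).mp hy0)) 2
  exact le_of_mul_le_mul_right (hlow.trans hup) hy

theorem LinearMap.IsSymmetric.sort_le_sort_succ_of_compression (hT : T.IsSymmetric)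
    (hbE : ∀ i, T (bE i) = (μ i : 𝕜) • bE i) (hS : S.IsSymmetric)
    (hbF : ∀ i, S (bF i) = (ν i : 𝕜) • bF i) (hV : ∀ y, ⟪V y, T (V y)⟫_𝕜 = ⟪y, S y⟫_𝕜)
    (i : Fin m) : ν (Tuple.sort ν i) ≤ μ (Tuple.sort μ i.succ) := by
  let U := span 𝕜 (bF '' ((Finset.Ici i).map (Tuple.sort ν).toEmbedding : Set (Fin m)))
  obtain ⟨_, ⟨y, hyU, rfl⟩, hy0, hup⟩ :=
    hT.exists_mem_ne_zero_re_inner_le_sort_mul hbE (W := U.map V.toLinearMap) i.succ <| by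
      rw [← (equivMapOfInjective _ V.injective U).finrank_eq, bF.finrank_span_image_finset,
        Finset.card_map, Fin.card_Ici]
      simp only [Fin.val_succ]
      omega
  have hlow := hS.le_re_inner_apply_self_of_mem_span hbF
    (fun _ hk => Tuple.apply_sort_le_apply_of_mem_map_Ici hk) hyU
  rw [LinearIsometry.coe_toLinearMap, hV, V.norm_map] at hup
  have hy : 0 < ‖y‖ ^ 2 := pow_pos (norm_pos_iff.mpr ((map_ne_zero_iff V V.injective).mp hy0)) 2
  exact le_of_mul_le_mul_right (hlow.trans hup) hy

end Compression

namespace EuclideanSpace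

variable {𝕜 : Type*} [RCLike 𝕜] {m : ℕ}

noncomputable def extendByZero (r : Fin (m + 1)) :
    EuclideanSpace 𝕜 (Fin m) →ₗᵢ[𝕜] EuclideanSpace 𝕜 (Fin (m + 1)) where
  toFun y := WithLp.toLp 2 (r.insertNth 0 y.ofLp)
  map_add' y z := by
    ext j
    refine Fin.succAboveCases r ?_ (fun i => ?_) j <;> simp
  map_smul' c y := by
    ext j
    refine Fin.succAboveCases r ?_ (fun i => ?_) j <;> simp
  norm_map' y := by simp [EuclideanSpace.norm_eq, Fin.sum_univ_succAbove _ r]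

theorem ofLp_extendByZero (r : Fin (m + 1)) (y : EuclideanSpace 𝕜 (Fin m)) :
    (extendByZero r y).ofLp = r.insertNth 0 y.ofLp :=
  rfl

end EuclideanSpace

open EuclideanSpace in
theorem Matrix.inner_extendByZero_toEuclideanLin {𝕜 : Type*} [RCLike 𝕜] {m : ℕ}
    (A : Matrix (Fin (m + 1)) (Fin (m + 1)) 𝕜) (r : Fin (m + 1)) (y : EuclideanSpace 𝕜 (Fin m)) :
    ⟪extendByZero r y, toEuclideanLin A (extendByZero r y)⟫_𝕜 =
      ⟪y, toEuclideanLin (A.submatrix r.succAbove r.succAbove) y⟫_𝕜 := by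
  simp only [EuclideanSpace.inner_eq_star_dotProduct, ofLp_toLpLin, toLin'_apply,
    ofLp_extendByZero, dotProduct, mulVec, Fin.sum_univ_succAbove _ r]
  simp

theorem Matrix.IsHermitian.toEuclideanLin_eigenvectorBasis {𝕜 n : Type*} [RCLike 𝕜] [Fintype n]
    [DecidableEq n] {A : Matrix n n 𝕜} (hA : A.IsHermitian) (i : n) :
    toEuclideanLin A (hA.eigenvectorBasis i) = (hA.eigenvalues i : 𝕜) • hA.eigenvectorBasis i := by
  rw [toLpLin_apply, hA.mulVec_eigenvectorBasis, RCLike.real_smul_eq_coe_smul (K := 𝕜)]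
  rfl

theorem Matrix.IsHermitian.sort_eigenvalues_interlace_submatrix_succAbove {𝕜 : Type*} [RCLike 𝕜]
    {m : ℕ} {A : Matrix (Fin (m + 1)) (Fin (m + 1)) 𝕜} {B : Matrix (Fin m) (Fin m) 𝕜}
    (hA : A.IsHermitian) (hB : B.IsHermitian) {r : Fin (m + 1)}
    (hBA : B = A.submatrix r.succAbove r.succAbove) (i : Fin m) :
    hA.eigenvalues (Tuple.sort hA.eigenvalues i.castSucc) ≤
        hB.eigenvalues (Tuple.sort hB.eigenvalues i) ∧
      hB.eigenvalues (Tuple.sort hB.eigenvalues i) ≤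
        hA.eigenvalues (Tuple.sort hA.eigenvalues i.succ) := by
  subst hBA
  have hT := isSymmetric_toEuclideanLin_iff.mpr hA
  have hS := isSymmetric_toEuclideanLin_iff.mpr hB
  have hV := inner_extendByZero_toEuclideanLin A r
  exact ⟨hT.sort_castSucc_le_sort_of_compression hA.toEuclideanLin_eigenvectorBasis hS
      hB.toEuclideanLin_eigenvectorBasis hV i,
    hT.sort_le_sort_succ_of_compression hA.toEuclideanLin_eigenvectorBasis hS
      hB.toEuclideanLin_eigenvectorBasis hV i⟩

theorem singular_value_interlacing_row_deletion_general
    {p n : ℕ}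
    (M : Matrix (Fin (p + 1)) (Fin n) ℂ) (r : Fin (p + 1))
    (M' : Matrix (Fin p) (Fin n) ℂ)
    (hM' : ∀ (i : Fin p) (j : Fin n), M' i j = M (r.succAbove i) j) :
    ∀ i : Fin p,
      singVals M (Fin.castSucc i) ≤ singVals M' i ∧
        singVals M' i ≤ singVals M i.succ := by
  intro i
  have hGram : M' * M'ᴴ = (M * Mᴴ).submatrix r.succAbove r.succAbove := by
    ext a b
    simp [mul_apply, hM']
  obtain ⟨hlow, hup⟩ :=
    (isHermitian_mul_conjTranspose_self M).sort_eigenvalues_interlace_submatrix_succAbove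
      (isHermitian_mul_conjTranspose_self M') hGram i
  exact ⟨Real.sqrt_le_sqrt hlow, Real.sqrt_le_sqrt hup⟩

/-- Cauchy interlacing for singular values under deletion of one row. -/
theorem singular_value_interlacing_row_deletion
    {p n : ℕ} (hpn : p + 1 ≤ n)
    (M : Matrix (Fin (p + 1)) (Fin n) ℂ) (r : Fin (p + 1))
    (M' : Matrix (Fin p) (Fin n) ℂ)
    (hM' : ∀ (i : Fin p) (j : Fin n), M' i j = M (r.succAbove i) j) :
    ∀ i : Fin p,
      singVals M (Fin.castSucc i) ≤ singVals M' i ∧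
        singVals M' i ≤ singVals M i.succ :=
  singular_value_interlacing_row_deletion_general M r M' hM'
end

section
/- Let $A_n$ be an $n \times n$ Hermitian matrix written in block form with top-left $(n-1)\times(n-1)$ block $A_{n-1}$, last column $X \in \mathbb{C}^{n-1}$ above the diagonal entry $a_{nn}$. Let $u_1, \ldots, u_{n-1}$ be an orthonormal eigenbasis of $A_{n-1}$ with eigenvalues $\lambda_1(A_{n-1}), \ldots, \lambda_{n-1}(A_{n-1})$, and suppose $X$ is not orthogonal to any $u_j$, and that $\lambda_i(A_n)$ is not an eigenvalue of $A_{n-1}$. Then for every $1 \le i \le n$: $\sum_{j=1}^{n-1} \frac{|u_j^* X|^2}{\lambda_j(A_{n-1}) - \lambda_i(A_n)} = a_{nn} - \lambda_i(A_n)$. -/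
/-!
Write the eigenvector of `A` for `λ = λᵢ(A)` as `(v, t)`, `t` its last coordinate. The first `m`
rows say `B v + t X = λ v`; pairing with `u_j` gives `(μ_j - λ) ⟨u_j, v⟩ = -t ⟨u_j, X⟩`. Hence
`t ≠ 0`, since otherwise `v ≠ 0` would be an eigenvector of `B` for `λ`, and expanding `X^* v` in
the basis `u` turns the last row `X^* v + a t = λ t` into
`-t ∑ |⟨u_j, X⟩|² / (μ_j - λ) = (λ - a) t`.
-/

open Matrix

section Secular

variable {𝕜 ι n : Type*} [RCLike 𝕜] [Fintype ι] [Fintype n]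

theorem Orthonormal.star_dotProduct_eq_sum {u : ι → EuclideanSpace 𝕜 n} (hu : Orthonormal 𝕜 u)
    (hcard : Fintype.card ι = Fintype.card n) (x y : n → 𝕜) :
    star x ⬝ᵥ y = ∑ j, (star x ⬝ᵥ (u j).ofLp) * (star (u j).ofLp ⬝ᵥ y) := by
  have hspan : ⊤ ≤ Submodule.span 𝕜 (Set.range u) :=
    (hu.linearIndependent.span_eq_top_of_card_eq_finrank' (by simpa using hcard)).ge
  have h := (OrthonormalBasis.mk hu hspan).sum_inner_mul_inner (WithLp.toLp 2 x) (WithLp.toLp 2 y)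
  simp only [OrthonormalBasis.coe_mk, EuclideanSpace.inner_eq_star_dotProduct] at h
  simpa only [dotProduct_comm] using h.symm

theorem Matrix.IsHermitian.star_dotProduct_mulVec_of_mulVec_eq_smul {B : Matrix n n 𝕜}
    (hB : B.IsHermitian) {u : n → 𝕜} {μ : ℝ} (hu : B *ᵥ u = (μ : 𝕜) • u) (v : n → 𝕜) :
    star u ⬝ᵥ (B *ᵥ v) = μ * (star u ⬝ᵥ v) := by
  rw [dotProduct_mulVec, ← hB.eq, ← star_mulVec, hu, star_smul, smul_dotProduct,
    RCLike.star_def, RCLike.conj_ofReal, smul_eq_mul]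

variable {B : Matrix n n 𝕜} {u : ι → EuclideanSpace 𝕜 n} {μ : ι → ℝ} {ν : 𝕜}

open scoped ComplexOrder in
theorem Matrix.IsHermitian.eq_zero_of_mulVec_eq_smul (hB : B.IsHermitian) (hu : Orthonormal 𝕜 u)
    (hcard : Fintype.card ι = Fintype.card n)
    (heig : ∀ j, B *ᵥ (u j).ofLp = (μ j : 𝕜) • (u j).ofLp) (hμ : ∀ j, (μ j : 𝕜) ≠ ν)
    {v : n → 𝕜} (hv : B *ᵥ v = ν • v) : v = 0 := by
  have hcoef : ∀ j, star (u j).ofLp ⬝ᵥ v = 0 := by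
    intro j
    have h := hB.star_dotProduct_mulVec_of_mulVec_eq_smul (heig j) v
    rw [hv, dotProduct_smul, smul_eq_mul] at h
    exact (mul_eq_mul_right_iff.mp h).resolve_left (hμ j).symm
  rw [← dotProduct_star_self_eq_zero, hu.star_dotProduct_eq_sum hcard]
  simp [hcoef]

theorem Matrix.IsHermitian.secular_equation (hB : B.IsHermitian) (hu : Orthonormal 𝕜 u)
    (hcard : Fintype.card ι = Fintype.card n)
    (heig : ∀ j, B *ᵥ (u j).ofLp = (μ j : 𝕜) • (u j).ofLp) (hμ : ∀ j, (μ j : 𝕜) ≠ ν)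
    {X v : n → 𝕜} {a t : 𝕜} (hrow : B *ᵥ v + t • X = ν • v)
    (hlast : star X ⬝ᵥ v + a * t = ν * t) (hvt : v ≠ 0 ∨ t ≠ 0) :
    ∑ j, (‖star (u j).ofLp ⬝ᵥ X‖ : 𝕜) ^ 2 / (μ j - ν) = a - ν := by
  have hcoef : ∀ j, star (u j).ofLp ⬝ᵥ v = -t * (star (u j).ofLp ⬝ᵥ X) / (μ j - ν) := by
    intro j
    have h := congrArg (star (u j).ofLp ⬝ᵥ ·) hrow
    simp only [dotProduct_add, dotProduct_smul, smul_eq_mul,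
      hB.star_dotProduct_mulVec_of_mulVec_eq_smul (heig j)] at h
    rw [eq_div_iff (sub_ne_zero.mpr (hμ j))]
    linear_combination h
  have ht : t ≠ 0 := by
    rintro rfl
    refine hvt.resolve_right (not_not.mpr rfl) (hB.eq_zero_of_mulVec_eq_smul hu hcard heig hμ ?_)
    simpa using hrow
  have hXv : star X ⬝ᵥ v = -t * ∑ j, (‖star (u j).ofLp ⬝ᵥ X‖ : 𝕜) ^ 2 / (μ j - ν) := by
    rw [hu.star_dotProduct_eq_sum hcard, Finset.mul_sum]
    refine Finset.sum_congr rfl fun j _ => ?_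
    rw [hcoef j, star_dotProduct X, ← RCLike.mul_conj, RCLike.star_def]
    ring
  refine mul_left_cancel₀ ht ?_
  linear_combination hXv - hlast

end Secular

section LastRow

variable {α : Type*} [NonUnitalNonAssocSemiring α] {m : ℕ}
  (A : Matrix (Fin (m + 1)) (Fin (m + 1)) α) (w : Fin (m + 1) → α)

theorem Matrix.mulVec_apply_castSucc (k : Fin m) :
    (A *ᵥ w) k.castSucc = (A.submatrix Fin.castSucc Fin.castSucc *ᵥ Fin.init w) k +
      A k.castSucc (Fin.last m) * w (Fin.last m) := by
  simp [mulVec, dotProduct, Fin.sum_univ_castSucc, Fin.init]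

theorem Matrix.mulVec_apply_last :
    (A *ᵥ w) (Fin.last m) = (fun j ↦ A (Fin.last m) j.castSucc) ⬝ᵥ Fin.init w +
      A (Fin.last m) (Fin.last m) * w (Fin.last m) := by
  simp [mulVec, dotProduct, Fin.sum_univ_castSucc, Fin.init]

end LastRow

theorem hermitian_interlacing_identity_general
    {m : ℕ} (A : Matrix (Fin (m + 1)) (Fin (m + 1)) ℂ) (hA : A.IsHermitian)
    (B : Matrix (Fin m) (Fin m) ℂ)
    (hB : ∀ i j : Fin m, B i j = A (Fin.castSucc i) (Fin.castSucc j))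
    (X : Fin m → ℂ) (hX : ∀ j : Fin m, X j = A (Fin.castSucc j) (Fin.last m))
    (u : Fin m → EuclideanSpace ℂ (Fin m)) (hu : Orthonormal ℂ u)
    (μ : Fin m → ℝ) (heig : ∀ j : Fin m, B *ᵥ (u j) = (μ j : ℂ) • (u j : Fin m → ℂ))
    (i : Fin (m + 1))
    (hsep : ∀ j : Fin m, μ j ≠ hA.eigenvalues i) :
    ∑ j : Fin m,
        ((‖star (u j : Fin m → ℂ) ⬝ᵥ X‖)^2 : ℂ) /
          ((μ j : ℂ) - (hA.eigenvalues i : ℂ)) =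
      A (Fin.last m) (Fin.last m) - (hA.eigenvalues i : ℂ) := by
  set w := (hA.eigenvectorBasis i).ofLp
  have hw : A *ᵥ w = (hA.eigenvalues i : ℂ) • w := by
    rw [hA.mulVec_eigenvectorBasis i]
    ext k
    simp [w, Complex.real_smul]
  have hB' : B = A.submatrix Fin.castSucc Fin.castSucc := Matrix.ext hB
  have hX' : X = fun j ↦ A j.castSucc (Fin.last m) := funext hX
  have hXstar : star X = fun j ↦ A (Fin.last m) j.castSucc := by
    ext j
    simp [hX, hA.apply]
  refine (hB' ▸ hA.submatrix Fin.castSucc).secular_equation hu rfl heig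
    (fun j h ↦ hsep j (RCLike.ofReal_injective h)) (v := Fin.init w) (t := w (Fin.last m)) ?_ ?_ ?_
  · ext k
    simpa [hB', hX', mul_comm, mulVec_apply_castSucc, Fin.init] using congrFun hw k.castSucc
  · simpa [hXstar, mulVec_apply_last] using congrFun hw (Fin.last m)
  · by_contra! h
    refine hA.eigenvectorBasis.orthonormal.ne_zero i ((WithLp.ofLp_eq_zero _).mp ?_)
    exact funext (Fin.lastCases h.2 (congrFun h.1))

/-- The Cauchy interlacing identity for a Hermitian matrix and its top-left minor. -/
theorem hermitian_interlacing_identity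
    {m : ℕ} (A : Matrix (Fin (m + 1)) (Fin (m + 1)) ℂ) (hA : A.IsHermitian)
    (B : Matrix (Fin m) (Fin m) ℂ)
    (hB : ∀ i j : Fin m, B i j = A (Fin.castSucc i) (Fin.castSucc j))
    (X : Fin m → ℂ) (hX : ∀ j : Fin m, X j = A (Fin.castSucc j) (Fin.last m))
    (u : Fin m → EuclideanSpace ℂ (Fin m)) (hu : Orthonormal ℂ u)
    (μ : Fin m → ℝ) (heig : ∀ j : Fin m, B *ᵥ (u j) = (μ j : ℂ) • (u j : Fin m → ℂ))
    (hXu : ∀ j : Fin m, star (u j : Fin m → ℂ) ⬝ᵥ X ≠ 0)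
    (i : Fin (m + 1))
    (hsep : ∀ j : Fin m, μ j ≠ hA.eigenvalues i) :
    ∑ j : Fin m,
        ((‖star (u j : Fin m → ℂ) ⬝ᵥ X‖)^2 : ℂ) /
          ((μ j : ℂ) - (hA.eigenvalues i : ℂ)) =
      A (Fin.last m) (Fin.last m) - (hA.eigenvalues i : ℂ) :=
  hermitian_interlacing_identity_general A hA B hB X hX u hu μ heig i hsep
end

section
/- Let $0 < y < 1$, $a = (1-\sqrt{y})^2$, $b = (1+\sqrt{y})^2$, and $\rho_{MP,y}$ the Marchenko–Pastur density. Then the principal value integral at the left edge satisfies $\mathrm{p.v.}\int_a^b \frac{\rho_{MP,y}(x)}{x - a}\,dx = \frac{1}{\sqrt{y} - y}$. -/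
/-!
Since `√((b - x)(x - a)) / (x - a) = (b - x) / √((b - x)(x - a))`, the integrand equals
`(2πy)⁻¹ (b / (x √Q) - 1 / √Q)` with `Q = (b - x)(x - a)`. Both terms have arcsine
antiderivatives, `arcsin ((2x - a - b)/(b - a))` and (after `t = 1/x`)
`arcsin (((a + b)x - 2ab)/((b - a)x)) / √(ab)`, each rising from `-π/2` to `π/2` on `[a, b]`;
so the integral is `(2πy)⁻¹ π (b/√(ab) - 1)` with `b/√(ab) = (1 + √y)/(1 - √y)`.
The combined derivative is nonnegative, which gives its integrability for free.
-/

open Real Set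

lemma HasDerivAt.arcsin_of_one_sub_sq_eq {u : ℝ → ℝ} {c d x : ℝ} (hu : HasDerivAt u c x)
    (hc : 0 < c) (hd : 0 < d) (h : 1 - u x ^ 2 = (c * d) ^ 2) :
    HasDerivAt (fun t => arcsin (u t)) d⁻¹ x := by
  have hlt : u x ^ 2 < 1 := by nlinarith [mul_pos hc hd]
  have h₁ : u x ≠ -1 := by rintro h'; simp [h'] at hlt
  have h₂ : u x ≠ 1 := by rintro h'; simp [h'] at hlt
  refine ((hasDerivAt_arcsin h₁ h₂).comp x hu).congr_deriv ?_
  rw [h, sqrt_sq (by positivity)]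
  field_simp

section

variable {a b x : ℝ}

lemma hasDerivAt_arcsin_affine (hx : x ∈ Ioo a b) :
    HasDerivAt (fun t => arcsin ((2 * t - a - b) / (b - a)))
      (√((b - x) * (x - a)))⁻¹ x := by
  obtain ⟨hax, hxb⟩ := hx
  have hu : HasDerivAt (fun t => (2 * t - a - b) / (b - a)) (2 / (b - a)) x := by
    simpa using (((hasDerivAt_id x).const_mul 2).sub_const a |>.sub_const b).div_const (b - a)
  refine hu.arcsin_of_one_sub_sq_eq (div_pos two_pos (by linarith))
    (sqrt_pos.2 (by nlinarith)) ?_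
  rw [mul_pow, sq_sqrt (by nlinarith)]
  field_simp [(by linarith : b - a ≠ 0)]
  ring

lemma hasDerivAt_arcsin_moebius (ha : 0 < a) (hx : x ∈ Ioo a b) :
    HasDerivAt (fun t => arcsin (((a + b) * t - 2 * a * b) / ((b - a) * t)))
      (√(a * b) / (x * √((b - x) * (x - a)))) x := by
  obtain ⟨hax, hxb⟩ := hx
  have hx0 : 0 < x := ha.trans hax
  have hba : 0 < b - a := by linarith
  have hb : 0 < b := by linarith
  have hQ : 0 < (b - x) * (x - a) := by nlinarith
  have hu : HasDerivAt (fun t => ((a + b) * t - 2 * a * b) / ((b - a) * t))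
      (2 * a * b / ((b - a) * x ^ 2)) x := by
    refine ((((hasDerivAt_id' x).const_mul (a + b)).sub_const (2 * a * b)).div
      ((hasDerivAt_id' x).const_mul (b - a)) (by positivity)).congr_deriv ?_
    field_simp
    ring
  rw [← inv_div]
  refine hu.arcsin_of_one_sub_sq_eq (by positivity) (by positivity) ?_
  rw [show ∀ c : ℝ, (c * (x * √((b - x) * (x - a)) / √(a * b))) ^ 2
      = c ^ 2 * x ^ 2 * √((b - x) * (x - a)) ^ 2 / √(a * b) ^ 2 from fun _ => by ring,
    sq_sqrt hQ.le, sq_sqrt (mul_pos ha hb).le]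
  field_simp
  ring

lemma integral_sub_div_mul_sqrt (ha : 0 < a) (hab : a < b) :
    ∫ x in a..b, (b - x) / (x * √((b - x) * (x - a))) = π * (b / √(a * b) - 1) := by
  have hba : b - a ≠ 0 := by linarith
  have hb : 0 < b := ha.trans hab
  set G := fun t => b / √(a * b) * arcsin (((a + b) * t - 2 * a * b) / ((b - a) * t))
    - arcsin ((2 * t - a - b) / (b - a)) with hG
  have hderiv : ∀ x ∈ Ioo a b, HasDerivAt G ((b - x) / (x * √((b - x) * (x - a)))) x := by
    intro x hx
    have hx0 : 0 < x := ha.trans hx.1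
    have hQ : 0 < √((b - x) * (x - a)) := sqrt_pos.2 (by nlinarith [hx.1, hx.2])
    have hsqrt_ab : 0 < √(a * b) := sqrt_pos.2 (mul_pos ha hb)
    refine (((hasDerivAt_arcsin_moebius ha hx).const_mul _).sub
      (hasDerivAt_arcsin_affine hx)).congr_deriv ?_
    field_simp
  have hcont : ContinuousOn G (Icc a b) := by
    refine (continuousOn_const.mul (continuous_arcsin.comp_continuousOn
      (ContinuousOn.div (by fun_prop) (by fun_prop) fun x hx => ?_))).sub
      (continuous_arcsin.comp (by fun_prop)).continuousOn
    have : 0 < x := ha.trans_le hx.1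
    positivity
  have hpos : ∀ x ∈ Ioo a b, 0 ≤ (b - x) / (x * √((b - x) * (x - a))) := fun x hx => by
    have : 0 < x := ha.trans hx.1
    have : 0 < b - x := by linarith [hx.2]
    positivity
  rw [intervalIntegral.integral_eq_sub_of_hasDerivAt_of_le hab.le hcont hderiv
    (intervalIntegral.intervalIntegrable_deriv_of_nonneg (by rwa [uIcc_of_le hab.le])
      (by simpa [hab.le] using hderiv) (by simpa [hab.le] using hpos))]
  have hGb : G b = b / √(a * b) * (π / 2) - π / 2 := by
    simp only [hG]
    rw [show ((a + b) * b - 2 * a * b) / ((b - a) * b) = 1 by field_simp; ring,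
      show (2 * b - a - b) / (b - a) = 1 by field_simp; ring, arcsin_one]
  have hGa : G a = -(b / √(a * b) * (π / 2)) + π / 2 := by
    simp only [hG]
    rw [show ((a + b) * a - 2 * a * b) / ((b - a) * a) = -1 by field_simp; ring,
      show (2 * a - a - b) / (b - a) = -1 by field_simp; ring, arcsin_neg_one]
    ring
  rw [hGb, hGa]
  ring

end

-- No sign conditions, thanks to `x / 0 = 0`: the endpoints of `[a, b]` need no separate case.
lemma sqrt_mul_div_eq_div_sqrt_mul (u v : ℝ) : √(u * v) / v = u / √(u * v) := by
  rcases eq_or_ne √(u * v) 0 with h | h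
  · simp [h]
  have huv : 0 < u * v := sqrt_ne_zero'.1 h
  have hv : v ≠ 0 := by rintro rfl; simp at huv
  rw [div_eq_div_iff hv h, mul_self_sqrt huv.le]

/-- Principal-value integral of the Marchenko–Pastur density at the left edge `a`:
since the density vanishes like a square root at `x = a`, the integral converges
absolutely and equals `1/(√y - y)`. -/
theorem marchenko_pastur_pv_integral_left_edge
    (y : ℝ) (hy0 : 0 < y) (hy1 : y < 1) :
    ∫ x in ((1 - Real.sqrt y) ^ 2)..((1 + Real.sqrt y) ^ 2),
        ((1 / (2 * Real.pi * x * y)) *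
            Real.sqrt (((1 + Real.sqrt y) ^ 2 - x) * (x - (1 - Real.sqrt y) ^ 2))) /
          (x - (1 - Real.sqrt y) ^ 2) = 1 / (Real.sqrt y - y) := by
  set s := √y
  have hs0 : 0 < s := sqrt_pos.2 hy0
  have hs1 : s < 1 := (sqrt_lt' one_pos).2 (by simpa using hy1)
  have hy : s ^ 2 = y := sq_sqrt hy0.le
  have h1s : 0 < 1 - s := by linarith
  set a := (1 - s) ^ 2
  set b := (1 + s) ^ 2
  have ha : 0 < a := by positivity
  have hab : a < b := by nlinarith
  have hratio : b / √(a * b) = (1 + s) / (1 - s) := by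
    rw [show a * b = ((1 - s) * (1 + s)) ^ 2 by ring, sqrt_sq (by positivity)]
    field_simp
    ring
  have hcongr : EqOn (fun x => 1 / (2 * π * x * y) * √((b - x) * (x - a)) / (x - a))
      (fun x => 1 / (2 * π * y) * ((b - x) / (x * √((b - x) * (x - a))))) (uIcc a b) :=
    fun x _ => by
      simp only [mul_div_assoc, sqrt_mul_div_eq_div_sqrt_mul]
      ring
  rw [intervalIntegral.integral_congr hcongr, intervalIntegral.integral_const_mul,
    integral_sub_div_mul_sqrt ha hab, hratio, ← hy]
  field_simp
  ring
end
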